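/- arXiv:math/0507173 — 2 statements merged into one kernel-verified Lean document; each statement's English description precedes it below -/
import Mathlib

section
/- Every finite 2-subgroup of the orthogonal group O(3) can be generated by at most 3 elements. -/
open Matrix Subgroup

/-- Abstract generation lemma: if `f` is a `±1`-valued multiplicative map, `g` is `±1`-valued
and multiplicative on `{f = 1}`, and everything in `{f = 1, g = 1}` lies in the closure of a
single element, then the group is 3-generated. -/
lemma aux_three_gen {Γ : Type*} [Group Γ] (f g : Γ → ℝ)
    (hf : ∀ x y : Γ, f (x * y) = f x * f y)
    (hf1 : ∀ x : Γ, f x = 1 ∨ f x = -1)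
    (hg : ∀ x y : Γ, f x = 1 → f y = 1 → g (x * y) = g x * g y)
    (hg1 : ∀ x : Γ, f x = 1 → g x = 1 ∨ g x = -1)
    (a : Γ) (ha : ∀ x : Γ, f x = 1 → g x = 1 → x ∈ Subgroup.closure {a}) :
    ∃ a b c : Γ, Subgroup.closure ({a, b, c} : Set Γ) = ⊤ := by
  classical
  have hfone : f 1 = 1 := by
    have h1 := hf 1 1
    rw [mul_one] at h1
    rcases hf1 1 with h | h
    · exact h
    · rw [h] at h1; norm_num at h1
  have hfinv : ∀ x : Γ, f x⁻¹ * f x = 1 := by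
    intro x
    have := hf x⁻¹ x
    rw [inv_mul_cancel, hfone] at this
    linarith
  have hgone : g 1 = 1 := by
    have h1 := hg 1 1 hfone hfone
    rw [mul_one] at h1
    rcases hg1 1 hfone with h | h
    · exact h
    · rw [h] at h1; norm_num at h1
  obtain ⟨b, hb⟩ : ∃ b : Γ, (∃ w : Γ, f w = 1 ∧ g w = -1) → f b = 1 ∧ g b = -1 := by
    by_cases hB : ∃ w : Γ, f w = 1 ∧ g w = -1
    · obtain ⟨w, hw⟩ := hB; exact ⟨w, fun _ => hw⟩
    · exact ⟨1, fun hw => absurd hw hB⟩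
  obtain ⟨c, hc⟩ : ∃ c : Γ, (∃ w : Γ, f w = -1) → f c = -1 := by
    by_cases hC : ∃ w : Γ, f w = -1
    · obtain ⟨w, hw⟩ := hC; exact ⟨w, fun _ => hw⟩
    · exact ⟨1, fun hw => absurd hw hC⟩
  refine ⟨a, b, c, ?_⟩
  rw [eq_top_iff]
  intro x _
  have hmem : ∀ y : Γ, f y = 1 → g y = 1 → y ∈ closure ({a, b, c} : Set Γ) := by
    intro y h1 h2
    exact Subgroup.closure_mono (by intro t ht; simp at ht; simp [ht]) (ha y h1 h2)
  have hK : ∀ y : Γ, f y = 1 → y ∈ closure ({a, b, c} : Set Γ) := by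
    intro y hy
    rcases hg1 y hy with h2 | h2
    · exact hmem y hy h2
    · obtain ⟨hfb, hgb⟩ := hb ⟨y, hy, h2⟩
      have hfbinv : f b⁻¹ = 1 := by have := hfinv b; rw [hfb] at this; linarith
      have hgbinv : g b⁻¹ = -1 := by
        have := hg b⁻¹ b hfbinv hfb
        rw [inv_mul_cancel, hgone, hgb] at this
        linarith
      have h3 : f (y * b⁻¹) = 1 := by rw [hf, hy, hfbinv]; ring
      have h4 : g (y * b⁻¹) = 1 := by rw [hg y b⁻¹ hy hfbinv, h2, hgbinv]; ring
      have h5 : y * b⁻¹ ∈ closure ({a, b, c} : Set Γ) := hmem _ h3 h4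
      have hbmem : b ∈ closure ({a, b, c} : Set Γ) := subset_closure (by simp)
      have := mul_mem h5 hbmem
      simpa using this
  rcases hf1 x with h1 | h1
  · exact hK x h1
  · have hfc := hc ⟨x, h1⟩
    have hfcinv : f c⁻¹ = -1 := by have := hfinv c; rw [hfc] at this; linarith
    have h3 : f (x * c⁻¹) = 1 := by rw [hf, h1, hfcinv]; ring
    have h5 := hK _ h3
    have hcmem : c ∈ closure ({a, b, c} : Set Γ) := subset_closure (by simp)
    have := mul_mem h5 hcmem
    simpa using this

/-- Main block lemma: given a faithful multiplicative "orthogonal matrix" representation `N`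
of a finite group `Γ` whose determinant-one part commutes with an element `z` represented by
`diagonal (1, -1, -1)` (up to indexing), the group is 3-generated. -/
lemma aux_block {Γ : Type*} [Group Γ] [Finite Γ]
    (N : Γ → Matrix (Fin 3) (Fin 3) ℝ)
    (hNmul : ∀ x y, N (x * y) = N x * N y)
    (hN1 : N 1 = 1)
    (hNinj : ∀ x, N x = 1 → x = 1)
    (hNo : ∀ x, N x * (N x)ᵀ = 1)
    (i₀ j₁ j₂ : Fin 3)
    (hne01 : i₀ ≠ j₁) (hne02 : i₀ ≠ j₂) (hne12 : j₁ ≠ j₂)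
    (hcov : ∀ i : Fin 3, i = i₀ ∨ i = j₁ ∨ i = j₂)
    (hsum : ∀ F : Fin 3 → ℝ, (∑ j, F j) = F i₀ + F j₁ + F j₂)
    (hdet3 : ∀ A : Matrix (Fin 3) (Fin 3) ℝ, A i₀ j₁ = 0 → A i₀ j₂ = 0 → A j₁ i₀ = 0 →
      A j₂ i₀ = 0 → A.det = A i₀ i₀ * (A j₁ j₁ * A j₂ j₂ - A j₁ j₂ * A j₂ j₁))
    (d : Fin 3 → ℝ) (hdi : d i₀ = 1) (hdj1 : d j₁ = -1) (hdj2 : d j₂ = -1)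
    (z : Γ) (hzc : ∀ x, (N x).det = 1 → N x * N z = N z * N x)
    (hNz : N z = Matrix.diagonal d) :
    ∃ a b c : Γ, Subgroup.closure ({a, b, c} : Set Γ) = ⊤ := by
  classical
  have hf : ∀ x y : Γ, (N (x * y)).det = (N x).det * (N y).det := by
    intro x y; rw [hNmul, Matrix.det_mul]
  have hf1 : ∀ x : Γ, (N x).det = 1 ∨ (N x).det = -1 := by
    intro x
    have h := congrArg Matrix.det (hNo x)
    rw [Matrix.det_mul, Matrix.det_transpose, Matrix.det_one] at h
    exact mul_self_eq_one_iff.mp h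
  -- block structure for determinant-one elements
  have hz0 : ∀ x : Γ, (N x).det = 1 →
      N x i₀ j₁ = 0 ∧ N x i₀ j₂ = 0 ∧ N x j₁ i₀ = 0 ∧ N x j₂ i₀ = 0 := by
    intro x hx
    have hcomm := hzc x hx
    rw [hNz] at hcomm
    have key : ∀ i j : Fin 3, d i ≠ d j → N x i j = 0 := by
      intro i j hnedij
      have h1 : (N x * Matrix.diagonal d) i j = (Matrix.diagonal d * N x) i j := by
        rw [hcomm]
      rw [Matrix.mul_diagonal, Matrix.diagonal_mul] at h1
      have h2 : N x i j * (d j - d i) = 0 := by linear_combination h1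
      rcases mul_eq_zero.mp h2 with h3 | h3
      · exact h3
      · exact absurd (by linarith : d i = d j) hnedij
    refine ⟨key _ _ ?_, key _ _ ?_, key _ _ ?_, key _ _ ?_⟩ <;> rw [hdi] <;>
      first
      | (rw [hdj1]; norm_num)
      | (rw [hdj2]; norm_num)
  have hg : ∀ x y : Γ, (N x).det = 1 → (N y).det = 1 →
      N (x * y) i₀ i₀ = N x i₀ i₀ * N y i₀ i₀ := by
    intro x y hx hy
    obtain ⟨hx1, hx2, _, _⟩ := hz0 x hx
    obtain ⟨_, _, hy3, hy4⟩ := hz0 y hy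
    rw [hNmul, Matrix.mul_apply, hsum (fun j => N x i₀ j * N y j i₀)]
    rw [hx1, hx2]
    ring
  have hg1 : ∀ x : Γ, (N x).det = 1 → N x i₀ i₀ = 1 ∨ N x i₀ i₀ = -1 := by
    intro x hx
    obtain ⟨hx1, hx2, _, _⟩ := hz0 x hx
    have h1 : (N x * (N x)ᵀ) i₀ i₀ = 1 := by rw [hNo x, Matrix.one_apply_eq]
    rw [Matrix.mul_apply, hsum (fun j => N x i₀ j * (N x)ᵀ j i₀)] at h1
    simp only [Matrix.transpose_apply] at h1
    rw [hx1, hx2] at h1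
    exact mul_self_eq_one_iff.mp (by linarith)
  -- the subgroup K' of elements with det 1 fixing the axis
  let K' : Subgroup Γ :=
    { carrier := {x | (N x).det = 1 ∧ N x i₀ i₀ = 1}
      one_mem' := by constructor <;> simp [hN1]
      mul_mem' := by
        rintro x y ⟨hx1, hx2⟩ ⟨hy1, hy2⟩
        refine ⟨by rw [hf, hx1, hy1]; ring, by rw [hg x y hx1 hy1, hx2, hy2]; ring⟩
      inv_mem' := by
        rintro x ⟨hx1, hx2⟩
        have hNi : N x⁻¹ * N x = 1 := by rw [← hNmul, inv_mul_cancel, hN1]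
        have hfi : (N x⁻¹).det = 1 := by
          have := congrArg Matrix.det hNi
          rw [Matrix.det_mul, Matrix.det_one, hx1, mul_one] at this
          exact this
        refine ⟨hfi, ?_⟩
        obtain ⟨hi1, hi2, _, _⟩ := hz0 x⁻¹ hfi
        obtain ⟨_, _, hx3, hx4⟩ := hz0 x hx1
        have h1 : (N x⁻¹ * N x) i₀ i₀ = 1 := by rw [hNi, Matrix.one_apply_eq]
        rw [Matrix.mul_apply, hsum (fun j => N x⁻¹ i₀ j * N x j i₀), hi1, hi2, hx2] at h1
        linarith }
  -- rotation form on K'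
  have hrel : ∀ x : Γ, (N x).det = 1 → N x i₀ i₀ = 1 →
      N x j₂ j₂ = N x j₁ j₁ ∧ N x j₂ j₁ = -N x j₁ j₂ ∧
      N x j₁ j₁ * N x j₁ j₁ + N x j₁ j₂ * N x j₁ j₂ = 1 := by
    intro x hx1 hx2
    obtain ⟨h1, h2, h3, h4⟩ := hz0 x hx1
    have row1 : N x j₁ j₁ * N x j₁ j₁ + N x j₁ j₂ * N x j₁ j₂ = 1 := by
      have h5 : (N x * (N x)ᵀ) j₁ j₁ = 1 := by rw [hNo x, Matrix.one_apply_eq]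
      rw [Matrix.mul_apply, hsum (fun j => N x j₁ j * (N x)ᵀ j j₁)] at h5
      simp only [Matrix.transpose_apply] at h5
      rw [h3] at h5
      linarith
    have row12 : N x j₁ j₁ * N x j₂ j₁ + N x j₁ j₂ * N x j₂ j₂ = 0 := by
      have h5 : (N x * (N x)ᵀ) j₁ j₂ = 0 := by rw [hNo x, Matrix.one_apply_ne hne12]
      rw [Matrix.mul_apply, hsum (fun j => N x j₁ j * (N x)ᵀ j j₂)] at h5
      simp only [Matrix.transpose_apply] at h5
      rw [h3, h4] at h5
      linarith
    have hdetb : N x j₁ j₁ * N x j₂ j₂ - N x j₁ j₂ * N x j₂ j₁ = 1 := by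
      have h5 := hdet3 (N x) h1 h2 h3 h4
      rw [hx1, hx2, one_mul] at h5
      linarith
    refine ⟨?_, ?_, row1⟩
    · linear_combination (N x j₁ j₁) * hdetb + (N x j₁ j₂) * row12 - (N x j₂ j₂) * row1
    · linear_combination (-(N x j₁ j₂)) * hdetb + (N x j₁ j₁) * row12 - (N x j₂ j₁) * row1
  -- embedding of K' into ℂˣ
  let toC : ↥K' → ℂ := fun x => (N ↑x j₁ j₁ : ℝ) + (N ↑x j₂ j₁ : ℝ) * Complex.I
  have hKmem : ∀ x : ↥K', (N (↑x : Γ)).det = 1 ∧ N (↑x : Γ) i₀ i₀ = 1 := fun x => x.2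
  have hCunit : ∀ x : ↥K',
      toC x * ((N ↑x j₁ j₁ : ℝ) - (N ↑x j₂ j₁ : ℝ) * Complex.I) = 1 := by
    intro x
    obtain ⟨hx1, hx2⟩ := hKmem x
    obtain ⟨he, hc, hn⟩ := hrel ↑x hx1 hx2
    have : ((N ↑x j₁ j₁ : ℝ) : ℂ) * (N ↑x j₁ j₁ : ℝ) +
        ((N ↑x j₂ j₁ : ℝ) : ℂ) * (N ↑x j₂ j₁ : ℝ) = 1 := by
      rw [hc]
      push_cast
      norm_cast
      linear_combination hn
    calc toC x * ((N ↑x j₁ j₁ : ℝ) - (N ↑x j₂ j₁ : ℝ) * Complex.I)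
        = ((N ↑x j₁ j₁ : ℝ) : ℂ) * (N ↑x j₁ j₁ : ℝ) +
          ((N ↑x j₂ j₁ : ℝ) : ℂ) * (N ↑x j₂ j₁ : ℝ) := by
          simp only [toC]
          ring_nf
          rw [Complex.I_sq]
          ring
      _ = 1 := this
  let ψ : ↥K' →* ℂˣ :=
    { toFun := fun x => ⟨toC x, (N ↑x j₁ j₁ : ℝ) - (N ↑x j₂ j₁ : ℝ) * Complex.I,
        hCunit x, by rw [mul_comm]; exact hCunit x⟩
      map_one' := by
        apply Units.ext
        show toC 1 = 1
        simp only [toC, OneMemClass.coe_one, hN1, Matrix.one_apply_eq,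
          Matrix.one_apply_ne (Ne.symm hne12)]
        simp
      map_mul' := by
        intro x y
        apply Units.ext
        show toC (x * y) = toC x * toC y
        obtain ⟨hx1, hx2⟩ := hKmem x
        obtain ⟨hy1, hy2⟩ := hKmem y
        obtain ⟨hex, hcx, _⟩ := hrel ↑x hx1 hx2
        obtain ⟨hey, hcy, _⟩ := hrel ↑y hy1 hy2
        obtain ⟨hx01, hx02, hx03, hx04⟩ := hz0 ↑x hx1
        obtain ⟨hy01, hy02, hy03, hy04⟩ := hz0 ↑y hy1
        have hco : ((↑(x * y) : Γ)) = (↑x : Γ) * ↑y := rfl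
        have e1 : N (↑(x * y) : Γ) j₁ j₁ =
            N ↑x j₁ j₁ * N ↑y j₁ j₁ - N ↑x j₁ j₂ * N ↑y j₂ j₁ * (-1) := by
          rw [hco, hNmul, Matrix.mul_apply, hsum (fun j => N ↑x j₁ j * N ↑y j j₁), hx03, hy01]
          ring
        have e2 : N (↑(x * y) : Γ) j₂ j₁ =
            N ↑x j₂ j₁ * N ↑y j₁ j₁ + N ↑x j₂ j₂ * N ↑y j₂ j₁ := by
          rw [hco, hNmul, Matrix.mul_apply, hsum (fun j => N ↑x j₂ j * N ↑y j j₁), hx04, hy01]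
          ring
        simp only [toC, e1, e2, hcx, hcy, hex, hey]
        push_cast
        ring_nf
        rw [Complex.I_sq]
        ring }
  have hψinj : Function.Injective ψ := by
    rw [injective_iff_map_eq_one]
    intro x hx
    obtain ⟨hx1, hx2⟩ := hKmem x
    obtain ⟨he, hc, _⟩ := hrel ↑x hx1 hx2
    obtain ⟨h1, h2, h3, h4⟩ := hz0 ↑x hx1
    have hval : toC x = 1 := by
      have := congrArg Units.val hx
      exact this
    have hre : N ↑x j₁ j₁ = 1 ∧ N ↑x j₂ j₁ = 0 := by
      have hr := congrArg Complex.re hval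
      have hi := congrArg Complex.im hval
      simp [toC] at hr hi
      exact ⟨hr, hi⟩
    have hb : N ↑x j₁ j₂ = 0 := by
      have := hc
      rw [hre.2] at this
      linarith
    have hee : N ↑x j₂ j₂ = 1 := by rw [he, hre.1]
    have : N (↑x : Γ) = 1 := by
      ext i j
      rcases hcov i with hi | hi | hi <;> rcases hcov j with hj | hj | hj <;>
        subst hi <;> subst hj <;>
        simp [hx2, h1, h2, h3, h4, hre.1, hre.2, hb, hee, Matrix.one_apply,
          hne01, hne02, hne12, Ne.symm hne01, Ne.symm hne02, Ne.symm hne12]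
    have := hNinj _ this
    exact Subtype.ext this
  haveI : Finite ↥ψ.range := Finite.of_surjective _ ψ.rangeRestrict_surjective
  haveI hcyc : IsCyclic ↥K' :=
    isCyclic_of_surjective _ (MonoidHom.ofInjective hψinj).symm.surjective
  obtain ⟨ξ, hξ⟩ := hcyc.exists_generator
  refine aux_three_gen (fun x => (N x).det) (fun x => N x i₀ i₀) hf hf1 hg hg1 ↑ξ ?_
  intro x hx1 hx2
  have hxm : (⟨x, hx1, hx2⟩ : ↥K') ∈ Subgroup.zpowers ξ := hξ _
  obtain ⟨k, hk⟩ := Subgroup.mem_zpowers_iff.mp hxm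
  rw [Subgroup.mem_closure_singleton]
  refine ⟨k, ?_⟩
  have := congrArg (fun y : ↥K' => (y : Γ)) hk
  simpa using this

set_option maxHeartbeats 1000000 in
set_option synthInstance.maxHeartbeats 400000 in
theorem finite_two_subgroup_O3_three_generators
    (H : Subgroup (Matrix.orthogonalGroup (Fin 3) ℝ)) (n : ℕ)
    (h : Nat.card H = 2 ^ n) :
    ∃ a b c : H, Subgroup.closure ({a, b, c} : Set H) = ⊤ := by
  classical
  haveI hfin : Finite ↥H := Nat.finite_of_card_ne_zero (by rw [h]; positivity)
  -- the matrix representation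
  let M : ↥H → Matrix (Fin 3) (Fin 3) ℝ := fun x =>
    ((x : Matrix.orthogonalGroup (Fin 3) ℝ) : Matrix (Fin 3) (Fin 3) ℝ)
  have hMmul : ∀ x y, M (x * y) = M x * M y := fun x y => rfl
  have hM1 : M 1 = 1 := rfl
  have hMinj : ∀ x, M x = 1 → x = 1 := by
    intro x hx
    apply Subtype.ext
    apply Subtype.ext
    exact hx
  have conjT : ∀ A : Matrix (Fin 3) (Fin 3) ℝ, Aᴴ = Aᵀ := by
    intro A
    ext i j
    simp [Matrix.conjTranspose_apply]
  have hMo : ∀ x, M x * (M x)ᵀ = 1 := by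
    intro x
    have h1 := Matrix.mem_unitaryGroup_iff.mp (x : Matrix.orthogonalGroup (Fin 3) ℝ).2
    rwa [Matrix.star_eq_conjTranspose, conjT] at h1
  have hMo' : ∀ x, (M x)ᵀ * M x = 1 := by
    intro x
    have h1 := Matrix.mem_unitaryGroup_iff'.mp (x : Matrix.orthogonalGroup (Fin 3) ℝ).2
    rwa [Matrix.star_eq_conjTranspose, conjT] at h1
  have hf1 : ∀ x : ↥H, (M x).det = 1 ∨ (M x).det = -1 := by
    intro x
    have h1 := congrArg Matrix.det (hMo x)
    rw [Matrix.det_mul, Matrix.det_transpose, Matrix.det_one] at h1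
    exact mul_self_eq_one_iff.mp h1
  by_cases htriv : ∀ x : ↥H, (M x).det = 1 → x = 1
  · -- degenerate case: the rotation subgroup is trivial
    refine aux_three_gen (fun x => (M x).det) (fun _ => 1)
      (fun x y => by show (M (x * y)).det = (M x).det * (M y).det; rw [hMmul, Matrix.det_mul]) hf1
      (fun x y _ _ => by norm_num) (fun x _ => Or.inl rfl) 1 ?_
    intro x hx _
    rw [htriv x hx]
    exact Subgroup.one_mem _
  · push_neg at htriv
    obtain ⟨x₀, hx₀det, hx₀ne⟩ := htriv
    -- the rotation subgroup K
    let K : Subgroup ↥H :=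
      { carrier := {x | (M x).det = 1}
        one_mem' := by simp [hM1]
        mul_mem' := by
          intro x y hx hy
          show (M (x * y)).det = 1
          rw [hMmul, Matrix.det_mul, hx, hy, mul_one]
        inv_mem' := by
          intro x hx
          show (M x⁻¹).det = 1
          have h1 : M x⁻¹ * M x = 1 := by rw [← hMmul, inv_mul_cancel, hM1]
          have := congrArg Matrix.det h1
          rw [Matrix.det_mul, Matrix.det_one, hx, mul_one] at this
          exact this }
    haveI : Nontrivial ↥K := by
      refine ⟨⟨x₀, hx₀det⟩, 1, ?_⟩
      intro hcon
      exact hx₀ne (by simpa using congrArg (fun y : ↥K => (y : ↥H)) hcon)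
    haveI : Fact (Nat.Prime 2) := ⟨Nat.prime_two⟩
    have hp : IsPGroup 2 ↥H := IsPGroup.of_card h
    have hpK : IsPGroup 2 ↥K := hp.to_subgroup K
    haveI : Nontrivial ↥(Subgroup.center ↥K) := hpK.center_nontrivial
    obtain ⟨w, hwne⟩ := exists_ne (1 : ↥(Subgroup.center ↥K))
    have hpc : IsPGroup 2 ↥(Subgroup.center ↥K) := hpK.to_subgroup _
    obtain ⟨k, hk⟩ := IsPGroup.iff_orderOf.mp hpc w
    have hk0 : k ≠ 0 := by
      rintro rfl
      rw [pow_zero] at hk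
      exact hwne (orderOf_eq_one_iff.mp hk)
    set z₀ : ↥(Subgroup.center ↥K) := w ^ (2 ^ (k - 1)) with hz₀def
    have hordz : orderOf z₀ = 2 := by
      rw [hz₀def, orderOf_pow, hk,
        Nat.gcd_eq_right (pow_dvd_pow 2 (Nat.sub_le k 1))]
      rw [Nat.pow_div (Nat.sub_le k 1) (by norm_num)]
      have : k - (k - 1) = 1 := by omega
      rw [this, pow_one]
    have hz₀sq : z₀ ^ 2 = 1 := by rw [← hordz]; exact pow_orderOf_eq_one z₀
    have hz₀ne : z₀ ≠ 1 := by
      intro hcon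
      rw [hcon, orderOf_one] at hordz
      norm_num at hordz
    -- z as an element of H
    set z : ↥H := ((z₀ : ↥K) : ↥H) with hzdef
    have hzsq : z * z = 1 := by
      have h1 : (z₀ : ↥K) * (z₀ : ↥K) = 1 := by
        have := congrArg (fun y : ↥(Subgroup.center ↥K) => (y : ↥K)) hz₀sq
        simpa [pow_two] using this
      have := congrArg (fun y : ↥K => (y : ↥H)) h1
      simpa using this
    have hzne : z ≠ 1 := by
      intro hcon
      apply hz₀ne
      apply Subtype.ext
      apply Subtype.ext
      exact hcon
    have hzdet : (M z).det = 1 := (z₀ : ↥K).2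
    have hzcomm : ∀ x : ↥H, (M x).det = 1 → M x * M z = M z * M x := by
      intro x hx
      have h1 : (⟨x, hx⟩ : ↥K) * (z₀ : ↥K) = (z₀ : ↥K) * ⟨x, hx⟩ :=
        (Subgroup.mem_center_iff.mp z₀.2 _)
      have h2 := congrArg (fun y : ↥K => M ((y : ↥H))) h1
      simpa [hMmul] using h2
    -- z is a symmetric orthogonal matrix
    have hsym : (M z)ᵀ = M z := by
      have h2 : M z * M z = 1 := by rw [← hMmul, hzsq, hM1]
      calc (M z)ᵀ = (M z)ᵀ * (M z * M z) := by rw [h2, mul_one]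
        _ = ((M z)ᵀ * M z) * M z := by rw [mul_assoc]
        _ = M z := by rw [hMo' z, one_mul]
    have hherm : (M z).IsHermitian := by
      show (M z)ᴴ = M z
      rw [conjT, hsym]
    set u : Matrix.unitaryGroup (Fin 3) ℝ := hherm.eigenvectorUnitary with hudef
    set d : Fin 3 → ℝ := hherm.eigenvalues with hddef
    have huu : star (u : Matrix (Fin 3) (Fin 3) ℝ) * u = 1 :=
      Matrix.mem_unitaryGroup_iff'.mp u.2
    have huu' : (u : Matrix (Fin 3) (Fin 3) ℝ) * star (u : Matrix (Fin 3) (Fin 3) ℝ) = 1 :=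
      Matrix.mem_unitaryGroup_iff.mp u.2
    -- conjugated representation
    set N : ↥H → Matrix (Fin 3) (Fin 3) ℝ :=
      fun x => star (u : Matrix (Fin 3) (Fin 3) ℝ) * M x * u with hNdef
    have hNmul : ∀ x y, N (x * y) = N x * N y := by
      intro x y
      show star (u : Matrix (Fin 3) (Fin 3) ℝ) * M (x * y) * u = _
      rw [hMmul]
      calc star (u : Matrix (Fin 3) (Fin 3) ℝ) * (M x * M y) * u
          = star (u : Matrix (Fin 3) (Fin 3) ℝ) * M x *
            ((u : Matrix (Fin 3) (Fin 3) ℝ) * star (u : Matrix (Fin 3) (Fin 3) ℝ)) * M y * u := by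
            rw [huu']; noncomm_ring
        _ = N x * N y := by simp only [hNdef]; noncomm_ring
    have hN1 : N 1 = 1 := by
      show star (u : Matrix (Fin 3) (Fin 3) ℝ) * M 1 * u = 1
      rw [hM1, mul_one, huu]
    have hNinj : ∀ x, N x = 1 → x = 1 := by
      intro x hx
      apply hMinj
      have h1 : (u : Matrix (Fin 3) (Fin 3) ℝ) *
          (star (u : Matrix (Fin 3) (Fin 3) ℝ) * M x * u) *
          star (u : Matrix (Fin 3) (Fin 3) ℝ) = M x := by
        calc (u : Matrix (Fin 3) (Fin 3) ℝ) * (star (u : Matrix (Fin 3) (Fin 3) ℝ) * M x * u) *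
            star (u : Matrix (Fin 3) (Fin 3) ℝ)
            = ((u : Matrix (Fin 3) (Fin 3) ℝ) * star (u : Matrix (Fin 3) (Fin 3) ℝ)) * M x *
              ((u : Matrix (Fin 3) (Fin 3) ℝ) * star (u : Matrix (Fin 3) (Fin 3) ℝ)) := by
              noncomm_ring
          _ = M x := by rw [huu']; simp
      rw [← h1]
      have hx' : star (u : Matrix (Fin 3) (Fin 3) ℝ) * M x * u = 1 := hx
      rw [hx']
      rw [mul_one, huu']
    have hNo : ∀ x, N x * (N x)ᵀ = 1 := by
      intro x
      have hmem : N x ∈ Matrix.unitaryGroup (Fin 3) ℝ := by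
        apply Submonoid.mul_mem
        apply Submonoid.mul_mem
        · exact Unitary.star_mem u.2
        · exact (x : Matrix.orthogonalGroup (Fin 3) ℝ).2
        · exact u.2
      have h1 := Matrix.mem_unitaryGroup_iff.mp hmem
      rwa [Matrix.star_eq_conjTranspose, conjT] at h1
    have hNdet : ∀ x, (N x).det = (M x).det := by
      intro x
      show (star (u : Matrix (Fin 3) (Fin 3) ℝ) * M x * u).det = _
      rw [Matrix.det_mul, Matrix.det_mul]
      have h1 : (star (u : Matrix (Fin 3) (Fin 3) ℝ)).det * (u : Matrix (Fin 3) (Fin 3) ℝ).det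
          = 1 := by
        rw [← Matrix.det_mul, huu, Matrix.det_one]
      calc (star (u : Matrix (Fin 3) (Fin 3) ℝ)).det * (M x).det *
          (u : Matrix (Fin 3) (Fin 3) ℝ).det
          = (star (u : Matrix (Fin 3) (Fin 3) ℝ)).det * (u : Matrix (Fin 3) (Fin 3) ℝ).det *
            (M x).det := by ring
        _ = (M x).det := by rw [h1, one_mul]
    have hNz : N z = Matrix.diagonal d := by
      show star (u : Matrix (Fin 3) (Fin 3) ℝ) * M z * u = Matrix.diagonal d
      have hspec := hherm.spectral_theorem
      have hof : (RCLike.ofReal ∘ hherm.eigenvalues : Fin 3 → ℝ) = d := by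
        funext i
        simp [hddef, RCLike.ofReal_real_eq_id]
      rw [hof] at hspec
      rw [hspec]
      calc star (u : Matrix (Fin 3) (Fin 3) ℝ) *
          ((u : Matrix (Fin 3) (Fin 3) ℝ) * Matrix.diagonal d *
            star (u : Matrix (Fin 3) (Fin 3) ℝ)) * u
          = (star (u : Matrix (Fin 3) (Fin 3) ℝ) * (u : Matrix (Fin 3) (Fin 3) ℝ)) *
            Matrix.diagonal d *
            (star (u : Matrix (Fin 3) (Fin 3) ℝ) * (u : Matrix (Fin 3) (Fin 3) ℝ)) := by
            noncomm_ring
        _ = Matrix.diagonal d := by rw [huu]; simp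
    -- eigenvalue pattern
    have hzc' : ∀ x, (N x).det = 1 → N x * N z = N z * N x := by
      intro x hx
      rw [hNdet] at hx
      have h1 := hzcomm x hx
      show (star (u : Matrix (Fin 3) (Fin 3) ℝ) * M x * u) *
          (star (u : Matrix (Fin 3) (Fin 3) ℝ) * M z * u) = _
      calc (star (u : Matrix (Fin 3) (Fin 3) ℝ) * M x * u) *
          (star (u : Matrix (Fin 3) (Fin 3) ℝ) * M z * u)
          = star (u : Matrix (Fin 3) (Fin 3) ℝ) * (M x *
            ((u : Matrix (Fin 3) (Fin 3) ℝ) * star (u : Matrix (Fin 3) (Fin 3) ℝ)) * M z) * u := by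
            noncomm_ring
        _ = star (u : Matrix (Fin 3) (Fin 3) ℝ) * (M x * M z) * u := by rw [huu']; simp
        _ = star (u : Matrix (Fin 3) (Fin 3) ℝ) * (M z * M x) * u := by rw [h1]
        _ = star (u : Matrix (Fin 3) (Fin 3) ℝ) * (M z *
            ((u : Matrix (Fin 3) (Fin 3) ℝ) * star (u : Matrix (Fin 3) (Fin 3) ℝ)) * M x) * u := by
            rw [huu']; simp
        _ = (star (u : Matrix (Fin 3) (Fin 3) ℝ) * M z * u) *
            (star (u : Matrix (Fin 3) (Fin 3) ℝ) * M x * u) := by noncomm_ring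
    have hd2 : ∀ i, d i * d i = 1 := by
      intro i
      have h1 : N z * N z = 1 := by rw [← hNmul, hzsq, hN1]
      rw [hNz, Matrix.diagonal_mul_diagonal] at h1
      have h2 := congrArg (fun A : Matrix (Fin 3) (Fin 3) ℝ => A i i) h1
      simpa using h2
    have hdprod : d 0 * d 1 * d 2 = 1 := by
      have h1 : (N z).det = 1 := by rw [hNdet]; exact hzdet
      rw [hNz, Matrix.det_diagonal, Fin.prod_univ_three] at h1
      exact h1
    have hdnotall : ¬(d 0 = 1 ∧ d 1 = 1 ∧ d 2 = 1) := by
      rintro ⟨h0, h1, h2⟩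
      apply hzne
      apply hNinj
      rw [hNz]
      have : d = fun _ => (1 : ℝ) := by
        funext i
        fin_cases i <;> assumption
      rw [this]
      exact Matrix.diagonal_one
    have hpm : ∀ i, d i = 1 ∨ d i = -1 := fun i => mul_self_eq_one_iff.mp (hd2 i)
    -- case analysis on the sign pattern
    have happly : ∀ i₀ j₁ j₂ : Fin 3, i₀ ≠ j₁ → i₀ ≠ j₂ → j₁ ≠ j₂ →
        (∀ i : Fin 3, i = i₀ ∨ i = j₁ ∨ i = j₂) →
        (∀ F : Fin 3 → ℝ, (∑ j, F j) = F i₀ + F j₁ + F j₂) →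
        (∀ A : Matrix (Fin 3) (Fin 3) ℝ, A i₀ j₁ = 0 → A i₀ j₂ = 0 → A j₁ i₀ = 0 →
          A j₂ i₀ = 0 → A.det = A i₀ i₀ * (A j₁ j₁ * A j₂ j₂ - A j₁ j₂ * A j₂ j₁)) →
        d i₀ = 1 → d j₁ = -1 → d j₂ = -1 →
        ∃ a b c : ↥H, Subgroup.closure ({a, b, c} : Set ↥H) = ⊤ := by
      intro i₀ j₁ j₂ h01 h02 h12 hcov hsum hdet3 hdi hdj1 hdj2
      exact aux_block N hNmul hN1 hNinj hNo i₀ j₁ j₂ h01 h02 h12 hcov hsum hdet3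
        d hdi hdj1 hdj2 z hzc' hNz
    rcases hpm 0 with h0 | h0 <;> rcases hpm 1 with h1 | h1 <;> rcases hpm 2 with h2 | h2
    · exact absurd ⟨h0, h1, h2⟩ hdnotall
    · rw [h0, h1, h2] at hdprod; norm_num at hdprod
    · rw [h0, h1, h2] at hdprod; norm_num at hdprod
    · exact happly 0 1 2 (by decide) (by decide) (by decide) (by decide)
        (fun F => by rw [Fin.sum_univ_three])
        (fun A ha1 ha2 ha3 ha4 => by rw [Matrix.det_fin_three, ha1, ha2, ha3, ha4]; ring)
        h0 h1 h2
    · rw [h0, h1, h2] at hdprod; norm_num at hdprod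
    · exact happly 1 0 2 (by decide) (by decide) (by decide) (by decide)
        (fun F => by rw [Fin.sum_univ_three]; ring)
        (fun A ha1 ha2 ha3 ha4 => by rw [Matrix.det_fin_three, ha1, ha2, ha3, ha4]; ring)
        h1 h0 h2
    · exact happly 2 0 1 (by decide) (by decide) (by decide) (by decide)
        (fun F => by rw [Fin.sum_univ_three]; ring)
        (fun A ha1 ha2 ha3 ha4 => by rw [Matrix.det_fin_three, ha1, ha2, ha3, ha4]; ring)
        h2 h0 h1
    · rw [h0, h1, h2] at hdprod; norm_num at hdprod
end

section
/- If G is a finite group with a cyclic normal subgroup K such that G/K is isomorphic to A5, then the derived subgroup G' is a perfect central extension of A5; in particular G' is quasisimple. -/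
/-!
The automorphism group of a cyclic group is abelian, so `G'` acts trivially by conjugation on
`K`. Since `A₅` is perfect, `G = G' K`, and `K` is abelian, so `K` is central in `G`. Central
factors do not change commutators, hence `G' = [G' K, G' K] = [G', G']`. Finally `G' → A₅` is
onto with kernel `G' ∩ K`; this is central in `G'`, and it is all of `Z(G')` because `A₅` has
trivial center.
-/

section

open Subgroup
open scoped commutatorElement

variable {G Q : Type*} [Group G] [Group Q]

theorem IsCyclic.commutator_le_centralizer (K : Subgroup G) [K.Normal] [IsCyclic K] :
    commutator G ≤ centralizer K := by
  let conjAction : G →* (ZMod (Nat.card K))ˣ :=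
    (IsCyclic.mulAutMulEquiv K).toMonoidHom.comp MulAut.conjNormal
  intro g hg
  have hconj : MulAut.conjNormal (H := K) g = 1 := by
    simpa [conjAction] using Abelianization.commutator_subset_ker conjAction hg
  rw [mem_centralizer_iff]
  intro k hk
  have hfix := congrArg Subtype.val (DFunLike.congr_fun hconj ⟨k, hk⟩)
  rw [MulAut.conjNormal_apply] at hfix
  exact (mul_inv_eq_iff_eq_mul.mp hfix).symm

theorem map_commutator_eq_top {ψ : G →* Q} (hψ : Function.Surjective ψ)
    (hQ : commutator Q = ⊤) : (commutator G).map ψ = ⊤ := by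
  rw [map_commutator_eq, ψ.range_eq_top.mpr hψ, ← commutator_def, hQ]

theorem le_center_of_commutator_sup_eq_top {K : Subgroup G} [IsMulCommutative K]
    (hK : commutator G ≤ centralizer K) (hsup : commutator G ⊔ K = ⊤) : K ≤ center G := by
  rw [← centralizer_univ, ← coe_top, ← hsup, le_centralizer_iff]
  exact sup_le hK (le_centralizer K)

theorem commutatorElement_mul_mem_center {z w : G} (hz : z ∈ center G) (hw : w ∈ center G)
    (c d : G) : ⁅c * z, d * w⁆ = ⁅c, d⁆ := by
  rw [mem_center_iff] at hz hw
  simp only [commutatorElement_def, mul_inv_rev]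
  calc c * z * (d * w) * (z⁻¹ * c⁻¹) * (w⁻¹ * d⁻¹)
      = c * ((z * (d * w)) * z⁻¹) * c⁻¹ * (w⁻¹ * d⁻¹) := by group
    _ = c * d * (w * c⁻¹ * w⁻¹) * d⁻¹ := by rw [← hz, mul_inv_cancel_right]; group
    _ = c * d * c⁻¹ * d⁻¹ := by rw [← hw, mul_inv_cancel_right]

theorem commutator_commutator_eq_self_of_sup_eq_top {K : Subgroup G} [K.Normal]
    (hK : K ≤ center G) (hsup : commutator G ⊔ K = ⊤) :
    ⁅commutator G, commutator G⁆ = commutator G := by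
  refine le_antisymm (commutator_le_self _) ?_
  rw [commutator_def, commutator_le]
  intro g _ h _
  obtain ⟨c, hc, z, hz, rfl⟩ := mem_sup_of_normal_right.mp (hsup ▸ mem_top g)
  obtain ⟨d, hd, w, hw, rfl⟩ := mem_sup_of_normal_right.mp (hsup ▸ mem_top h)
  rw [commutatorElement_mul_mem_center (hK hz) (hK hw)]
  exact commutator_mem_commutator hc hd

theorem commutator_eq_top_of_commutator_eq_self {H : Subgroup G} (hH : ⁅H, H⁆ = H) :
    commutator H = ⊤ :=
  map_injective H.subtype_injective <| by
    rw [map_subtype_commutator, hH, ← MonoidHom.range_eq_map, range_subtype]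

theorem MonoidHom.ker_eq_center_of_surjective {H : Type*} [Group H] {φ : H →* Q}
    (hφ : Function.Surjective φ) (hker : φ.ker ≤ center H) (hQ : center Q = ⊥) :
    φ.ker = center H := by
  refine le_antisymm hker fun c hc => ?_
  have : φ c ∈ center Q := mem_center_iff.mpr fun q => by
    obtain ⟨d, rfl⟩ := hφ q
    rw [← map_mul, ← map_mul, mem_center_iff.mp hc d]
  rwa [hQ, mem_bot] at this

theorem nonempty_quotient_center_mulEquiv_of_map_eq_top {ψ : G →* Q} {H : Subgroup G}
    (hH : H.map ψ = ⊤) (hcentral : ψ.ker ≤ center G) (hQ : center Q = ⊥) :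
    Nonempty (H ⧸ center H ≃* Q) := by
  let φ := ψ.comp H.subtype
  have hφ : Function.Surjective φ := by
    rw [← MonoidHom.range_eq_top, MonoidHom.range_comp, range_subtype, hH]
  have hker : φ.ker ≤ center H := fun c hc =>
    mem_center_iff.mpr fun d => Subtype.ext (mem_center_iff.mp (hcentral hc) d)
  have hkerφ := φ.ker_eq_center_of_surjective hφ hker hQ
  exact ⟨(QuotientGroup.quotientMulEquivOfEq hkerφ.symm).trans
    (QuotientGroup.quotientKerEquivOfSurjective φ hφ)⟩

end

theorem derived_subgroup_quasisimple_general (G : Type*) [Group G]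
    (K : Subgroup G) [K.Normal] (hK : IsCyclic K)
    (h : Nonempty ((G ⧸ K) ≃* alternatingGroup (Fin 5))) :
    (⁅(⊤ : Subgroup (commutator G)), (⊤ : Subgroup (commutator G))⁆ = ⊤) ∧
    Nonempty ((commutator G ⧸ Subgroup.center (commutator G)) ≃*
      alternatingGroup (Fin 5)) := by
  obtain ⟨e⟩ := h
  let ψ : G →* alternatingGroup (Fin 5) := e.toMonoidHom.comp (QuotientGroup.mk' K)
  have hψ : Function.Surjective ψ := e.surjective.comp (QuotientGroup.mk'_surjective K)
  have hker : ψ.ker = K := by simp [ψ]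
  have hmap : (commutator G).map ψ = ⊤ :=
    map_commutator_eq_top hψ (commutator_alternatingGroup_eq_top (by simp))
  have hsup : commutator G ⊔ K = ⊤ := by
    rw [← hker, ← Subgroup.comap_map_eq, hmap, Subgroup.comap_top]
  have hcentral : K ≤ Subgroup.center G :=
    le_center_of_commutator_sup_eq_top (IsCyclic.commutator_le_centralizer K) hsup
  exact ⟨commutator_eq_top_of_commutator_eq_self
      (commutator_commutator_eq_self_of_sup_eq_top hcentral hsup),
    nonempty_quotient_center_mulEquiv_of_map_eq_top hmap (hker ▸ hcentral)
      (alternatingGroup.center_eq_bot (by simp))⟩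

theorem derived_subgroup_quasisimple (G : Type*) [Group G] [Finite G]
    (K : Subgroup G) [K.Normal] (hK : IsCyclic K)
    (h : Nonempty ((G ⧸ K) ≃* alternatingGroup (Fin 5))) :
    (⁅(⊤ : Subgroup (commutator G)), (⊤ : Subgroup (commutator G))⁆ = ⊤) ∧
    Nonempty ((commutator G ⧸ Subgroup.center (commutator G)) ≃*
      alternatingGroup (Fin 5)) :=
  derived_subgroup_quasisimple_general G K hK h
end
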